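/- arXiv:1310.1199 — 4 statements merged into one kernel-verified Lean document; each statement's English description precedes it below -/
import Mathlib

section
/- Let X be a non-negative heavy-tailed random variable. Then there exist numbers 0 < a < b < ∞ and a concave function h* : [0,∞) → [0,∞) with h*(0) = 0 such that E[exp(a·h*(X))] < ∞ and E[exp(b·h*(X))] = ∞. -/
/-!
Write `P(X > t) = exp (-ℓ t)`, the tail measured from inside. Heavy tails mean `ℓ t < ε t` for
arbitrarily large `t`, for every `ε > 0`, while `ℓ → ∞` since `X` is finite. Take `h*` piecewise
linear with value `2^m - 1` at knots `x_m` whose gaps at least double (so the slopes decrease and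
`h*` is concave), spread far enough apart that `ℓ x_m ≥ 2^(m+1) - 2`. Then
`E exp (h*(X) / 2) ≤ ∑ₘ exp (h*(x_{m+1}) / 2 - ℓ x_m) < ∞`. If `ℓ x_m ≥ 2^(m+2)` held for all large
`m`, the gaps would eventually exactly double, so `x_m = O(2^m)` and `ℓ` would grow linearly,
which heavy tails forbid. Hence `ℓ x_m < 2^(m+2)` infinitely often, and at such knots
`E exp (5 h*(X)) ≥ exp (5 h*(x_m) - ℓ x_m) ≥ exp (2^m - 5)`.
-/

open MeasureTheory Filter Set

section InnerTail

variable {Ω : Type*} [MeasurableSpace Ω] (μ : Measure Ω) (X : Ω → ℝ)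

-- `X` is not assumed measurable, so `{t < X}` is measured from inside: this is the tail that
-- lower Lebesgue integrals of functions of `X` see.
noncomputable def innerTail (t : ℝ) : ENNReal :=
  ⨆ (B : Set Ω) (_ : MeasurableSet B ∧ B ⊆ {ω | t < X ω}), μ B

variable {μ X}

lemma le_innerTail {B : Set Ω} {t : ℝ} (hB : MeasurableSet B) (hBX : B ⊆ {ω | t < X ω}) :
    μ B ≤ innerTail μ X t :=
  le_iSup₂ (f := fun (B : Set Ω) (_ : MeasurableSet B ∧ B ⊆ {ω | t < X ω}) => μ B) B ⟨hB, hBX⟩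

lemma innerTail_le_measure_univ (t : ℝ) : innerTail μ X t ≤ μ univ :=
  iSup₂_le fun _ _ => measure_mono (subset_univ _)

lemma innerTail_antitone : Antitone (innerTail μ X) := fun _ _ hst =>
  iSup₂_le fun _ hB => le_innerTail hB.1 fun _ hω => hst.trans_lt (hB.2 hω)

lemma mul_innerTail_le_lintegral {g : Ω → ENNReal} {c : ENNReal} {t : ℝ}
    (hg : ∀ ω, t < X ω → c ≤ g ω) : c * innerTail μ X t ≤ ∫⁻ ω, g ω ∂μ := by
  simp only [innerTail, ENNReal.mul_iSup]
  refine iSup₂_le fun B hB => ?_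
  rw [← lintegral_indicator_const hB.1]
  refine lintegral_mono fun ω => ?_
  by_cases hω : ω ∈ B
  · simpa [hω] using hg ω (hB.2 hω)
  · simp [hω]

lemma lintegral_le_tsum_innerTail {φ : ℝ → ENNReal} (hφ : Monotone φ) {u : ℕ → ℝ}
    (hu : ∀ x, ∃ n, x ≤ u n) :
    ∫⁻ ω, φ (X ω) ∂μ ≤ φ (u 0) * μ univ + ∑' n, φ (u (n + 1)) * innerTail μ X (u n) := by
  obtain ⟨g, hgm, hgφ, hint⟩ := exists_measurable_le_lintegral_eq μ fun ω => φ (X ω)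
  set B : ℕ → Set Ω := fun n => {ω | φ (u n) < g ω}
  have hBm (n : ℕ) : MeasurableSet (B n) := measurableSet_lt measurable_const hgm
  have hBX (n : ℕ) : B n ⊆ {ω | u n < X ω} := fun ω hω =>
    lt_of_not_ge fun h => (hω.trans_le ((hgφ ω).trans (hφ h))).false
  have hg_le (ω : Ω) : g ω ≤ φ (u 0) + ∑' n, (B n).indicator (fun _ => φ (u (n + 1))) ω := by
    classical
    have hex : ∃ n, g ω ≤ φ (u n) := (hu (X ω)).imp fun n hn => (hgφ ω).trans (hφ hn)
    have hspec := Nat.find_spec hex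
    rcases hN : Nat.find hex with _ | N
    · exact (hN ▸ hspec).trans le_self_add
    · have hωB : ω ∈ B N := not_le.1 (Nat.find_min hex (hN ▸ N.lt_succ_self))
      calc g ω ≤ φ (u (N + 1)) := hN ▸ hspec
        _ = (B N).indicator (fun _ => φ (u (N + 1))) ω :=
          (indicator_of_mem hωB (fun _ => _)).symm
        _ ≤ _ := ENNReal.le_tsum N
        _ ≤ _ := le_add_self
  calc ∫⁻ ω, φ (X ω) ∂μ
      ≤ ∫⁻ ω, (φ (u 0) + ∑' n, (B n).indicator (fun _ => φ (u (n + 1))) ω) ∂μ :=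
        hint ▸ lintegral_mono hg_le
    _ = φ (u 0) * μ univ + ∑' n, φ (u (n + 1)) * μ (B n) := by
        rw [lintegral_add_left measurable_const, lintegral_const,
          lintegral_tsum fun n => (measurable_const.indicator (hBm n)).aemeasurable]
        simp only [lintegral_indicator_const (hBm _)]
    _ ≤ _ := by gcongr with n; exact le_innerTail (hBm n) (hBX n)

lemma lintegral_exp_lt_top_of_innerTail_le [IsFiniteMeasure μ] {ψ : ℝ → ℝ} (hψ : Monotone ψ)
    {u : ℕ → ℝ} (hu : ∀ x, ∃ n, x ≤ u n) {C : ℝ}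
    (hC : ∀ n : ℕ, innerTail μ X (u n) ≤ ENNReal.ofReal (Real.exp (C - n - ψ (u (n + 1))))) :
    ∫⁻ ω, ENNReal.ofReal (Real.exp (ψ (X ω))) ∂μ < ⊤ := by
  have hterm (n : ℕ) : ENNReal.ofReal (Real.exp (ψ (u (n + 1)))) * innerTail μ X (u n) ≤
      ENNReal.ofReal (Real.exp C * Real.exp (-n)) := by
    calc _ ≤ ENNReal.ofReal (Real.exp (ψ (u (n + 1)))) *
          ENNReal.ofReal (Real.exp (C - n - ψ (u (n + 1)))) := by gcongr; exact hC n
      _ = _ := by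
        rw [← ENNReal.ofReal_mul (Real.exp_nonneg _), ← Real.exp_add, ← Real.exp_add]
        ring_nf
  have hsum : ∑' n : ℕ, ENNReal.ofReal (Real.exp C * Real.exp (-n)) ≠ ⊤ := by
    rw [← ENNReal.ofReal_tsum_of_nonneg (fun n => by positivity)
      (Real.summable_exp_neg_nat.mul_left _)]
    exact ENNReal.ofReal_ne_top
  refine (lintegral_le_tsum_innerTail (fun _ _ h => ENNReal.ofReal_le_ofReal
    (Real.exp_le_exp.2 (hψ h))) hu).trans_lt ?_
  exact ENNReal.add_lt_top.2 ⟨ENNReal.mul_lt_top ENNReal.ofReal_lt_top (measure_lt_top μ _),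
    ((ENNReal.tsum_le_tsum hterm).trans_lt hsum.lt_top)⟩

lemma lintegral_exp_eq_top_of_le_innerTail {ψ : ℝ → ℝ} (hψ : Monotone ψ)
    (h : ∀ M : ℝ, ∃ t, ENNReal.ofReal (Real.exp (M - ψ t)) ≤ innerTail μ X t) :
    ∫⁻ ω, ENNReal.ofReal (Real.exp (ψ (X ω))) ∂μ = ⊤ := by
  refine ENNReal.eq_top_of_forall_nnreal_le fun r => ?_
  obtain ⟨t, ht⟩ := h (Real.log r)
  calc (r : ENNReal) ≤ ENNReal.ofReal (Real.exp (ψ t)) *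
        ENNReal.ofReal (Real.exp (Real.log r - ψ t)) := by
        rw [← ENNReal.ofReal_mul (Real.exp_nonneg _), ← Real.exp_add, add_sub_cancel,
          ← ENNReal.ofReal_coe_nnreal]
        exact ENNReal.ofReal_le_ofReal (Real.le_exp_log _)
    _ ≤ ENNReal.ofReal (Real.exp (ψ t)) * innerTail μ X t := by gcongr
    _ ≤ _ := mul_innerTail_le_lintegral fun ω hω =>
        ENNReal.ofReal_le_ofReal (Real.exp_le_exp.2 (hψ hω.le))

lemma exists_innerTail_lt [IsFiniteMeasure μ] {c : ENNReal} (hc : 0 < c) :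
    ∃ t, innerTail μ X t < c := by
  by_contra! hge
  have hc2 : c / 2 < c := ENNReal.half_lt_self hc.ne'
    (ne_top_of_le_ne_top (measure_ne_top μ univ) ((hge 0).trans (innerTail_le_measure_univ 0)))
  have hB (n : ℕ) : ∃ B, MeasurableSet B ∧ B ⊆ {ω | (n : ℝ) < X ω} ∧ c / 2 < μ B := by
    simpa only [innerTail, lt_iSup_iff, exists_prop, and_assoc] using hc2.trans_le (hge n)
  choose B hBm hBX hBμ using hB
  set C : ℕ → Set Ω := fun n => ⋃ k ∈ Ici n, B k
  have hC_anti : Antitone C := fun m n hmn => biUnion_subset_biUnion_left (Ici_subset_Ici.2 hmn)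
  have hC_empty : ⋂ n, C n = ∅ := by
    refine eq_empty_of_forall_notMem fun ω hω => ?_
    obtain ⟨n, hn⟩ := exists_nat_gt (X ω)
    obtain ⟨k, hkn, hk⟩ := mem_iUnion₂.1 (mem_iInter.1 hω n)
    have hkX : (k : ℝ) < X ω := hBX k hk
    have : (n : ℝ) ≤ k := Nat.cast_le.2 hkn
    linarith
  have htend := tendsto_measure_iInter_atTop
    (fun n => (MeasurableSet.biUnion (to_countable _) fun k _ => hBm k).nullMeasurableSet)
    hC_anti ⟨0, measure_ne_top μ _⟩
  rw [hC_empty, measure_empty] at htend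
  obtain ⟨n, hn⟩ := (htend.eventually_lt_const (ENNReal.half_pos hc.ne')).exists
  exact (hBμ n).not_ge ((measure_mono (subset_biUnion_of_mem (mem_Ici.2 le_rfl))).trans hn.le)

lemma exists_exp_lt_innerTail [IsFiniteMeasure μ]
    (hheavy : ∀ s > (0 : ℝ), ∫⁻ ω, ENNReal.ofReal (Real.exp (s * X ω)) ∂μ = ⊤)
    {s : ℝ} (hs : 0 < s) (t₀ : ℝ) :
    ∃ t ≥ t₀, ENNReal.ofReal (Real.exp (-(s * t))) < innerTail μ X t := by
  -- Otherwise the levels `t₁ + 2 n / s` show that `E exp (s X / 2)` is finite.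
  by_contra! hlight
  set t₁ := max t₀ 0
  refine (lintegral_exp_lt_top_of_innerTail_le (ψ := fun x => s / 2 * x) (C := 1)
    (u := fun n => t₁ + 2 / s * n) (fun _ _ h => mul_le_mul_of_nonneg_left h (by positivity))
    (fun x => ?_) (fun n => ?_)).ne (hheavy (s / 2) (by positivity))
  · obtain ⟨n, hn⟩ := exists_nat_ge (s / 2 * (x - t₁))
    refine ⟨n, ?_⟩
    have : 2 / s * (s / 2 * (x - t₁)) = x - t₁ := by field_simp
    nlinarith [le_max_right t₀ 0, div_pos two_pos hs]
  · refine (hlight _ (le_add_of_le_of_nonneg (le_max_left _ _) (by positivity))).trans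
      (ENNReal.ofReal_le_ofReal (Real.exp_le_exp.2 ?_))
    have : s * (2 / s) = 2 := by field_simp
    push_cast
    nlinarith [le_max_right t₀ 0]

lemma innerTail_pos [IsFiniteMeasure μ]
    (hheavy : ∀ s > (0 : ℝ), ∫⁻ ω, ENNReal.ofReal (Real.exp (s * X ω)) ∂μ = ⊤) (t : ℝ) :
    0 < innerTail μ X t := by
  obtain ⟨t', htt', hlt⟩ := exists_exp_lt_innerTail hheavy one_pos t
  exact zero_le.trans_lt (hlt.trans_le (innerTail_antitone htt'))

end InnerTail

section TailRate

variable {Ω : Type*} [MeasurableSpace Ω] (μ : Measure Ω) (X : Ω → ℝ)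

noncomputable def tailRate (t : ℝ) : ℝ := -Real.log (innerTail μ X t).toReal

variable {μ X}

lemma tailRate_nonneg [IsProbabilityMeasure μ] (t : ℝ) : 0 ≤ tailRate μ X t := by
  refine neg_nonneg.2 (Real.log_nonpos ENNReal.toReal_nonneg ?_)
  exact ENNReal.toReal_le_of_le_ofReal zero_le_one
    ((innerTail_le_measure_univ t).trans_eq (by simp))

variable [IsFiniteMeasure μ]

lemma innerTail_eq_exp_neg_tailRate {t : ℝ} (ht : 0 < innerTail μ X t) :
    innerTail μ X t = ENNReal.ofReal (Real.exp (-tailRate μ X t)) := by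
  have hne_top : innerTail μ X t ≠ ⊤ :=
    ne_top_of_le_ne_top (measure_ne_top μ univ) (innerTail_le_measure_univ t)
  rw [tailRate, neg_neg, Real.exp_log (ENNReal.toReal_pos ht.ne' hne_top),
    ENNReal.ofReal_toReal hne_top]

lemma tailRate_monotone (hpos : ∀ t, 0 < innerTail μ X t) : Monotone (tailRate μ X) := by
  intro s t hst
  have h := innerTail_antitone (μ := μ) (X := X) hst
  rw [innerTail_eq_exp_neg_tailRate (hpos s), innerTail_eq_exp_neg_tailRate (hpos t),
    ENNReal.ofReal_le_ofReal_iff (Real.exp_nonneg _), Real.exp_le_exp] at h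
  linarith

lemma exists_le_tailRate (hpos : ∀ t, 0 < innerTail μ X t) (v : ℝ) :
    ∃ t, v ≤ tailRate μ X t := by
  obtain ⟨t, ht⟩ := exists_innerTail_lt (μ := μ) (X := X) (c := ENNReal.ofReal (Real.exp (-v)))
    (by positivity)
  refine ⟨t, ?_⟩
  rw [innerTail_eq_exp_neg_tailRate (hpos t), ENNReal.ofReal_lt_ofReal_iff (Real.exp_pos _),
    Real.exp_lt_exp] at ht
  linarith

lemma exists_tailRate_lt
    (hheavy : ∀ s > (0 : ℝ), ∫⁻ ω, ENNReal.ofReal (Real.exp (s * X ω)) ∂μ = ⊤)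
    {ε : ℝ} (hε : 0 < ε) (t₀ : ℝ) : ∃ t ≥ t₀, tailRate μ X t < ε * t := by
  obtain ⟨t, ht₀, ht⟩ := exists_exp_lt_innerTail hheavy hε t₀
  refine ⟨t, ht₀, ?_⟩
  rw [innerTail_eq_exp_neg_tailRate (zero_le.trans_lt ht),
    ENNReal.ofReal_lt_ofReal_iff (Real.exp_pos _), Real.exp_lt_exp] at ht
  linarith

end TailRate

namespace Regularizer

variable (ℓ T : ℝ → ℝ)

-- `knotGap m = (x_m, x_m - x_{m-1})`, where `T v` is meant to be a point with `v ≤ ℓ (T v)`.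
-- Every gap is at least twice the previous one plus one, which makes the slopes of the piecewise
-- linear `regularizer` decrease; `nextKnot` goes beyond that only as far as needed to reach
-- `2^(m+2) ≤ ℓ x_{m+1}`.
noncomputable def nextKnot (m : ℕ) (y : ℝ) : ℝ :=
  if (2 : ℝ) ^ (m + 2) ≤ ℓ y then y else max y (T (2 ^ (m + 2)))

noncomputable def knotGap : ℕ → ℝ × ℝ
  | 0 => (0, 0)
  | m + 1 =>
    (nextKnot ℓ T m ((knotGap m).1 + 2 * (knotGap m).2 + 1),
      nextKnot ℓ T m ((knotGap m).1 + 2 * (knotGap m).2 + 1) - (knotGap m).1)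

noncomputable def knot (m : ℕ) : ℝ := (knotGap ℓ T m).1

noncomputable def gap (m : ℕ) : ℝ := (knotGap ℓ T m).2

noncomputable def slope (m : ℕ) : ℝ := 2 ^ m / gap ℓ T (m + 1)

noncomputable def line (m : ℕ) (y : ℝ) : ℝ := 2 ^ m - 1 + slope ℓ T m * (y - knot ℓ T m)

lemma knot_zero : knot ℓ T 0 = 0 := rfl

lemma knot_succ (m : ℕ) : knot ℓ T (m + 1) = nextKnot ℓ T m (knot ℓ T m + 2 * gap ℓ T m + 1) :=
  rfl

lemma gap_succ (m : ℕ) : gap ℓ T (m + 1) = knot ℓ T (m + 1) - knot ℓ T m := rfl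

lemma le_nextKnot (m : ℕ) (y : ℝ) : y ≤ nextKnot ℓ T m y := by
  unfold nextKnot; split_ifs <;> simp

lemma nextKnot_of_le {m : ℕ} {y : ℝ} (h : (2 : ℝ) ^ (m + 2) ≤ ℓ y) : nextKnot ℓ T m y = y :=
  if_pos h

lemma le_ell_nextKnot (hmono : Monotone ℓ) (hT : ∀ v, v ≤ ℓ (T v)) (m : ℕ) (y : ℝ) :
    (2 : ℝ) ^ (m + 2) ≤ ℓ (nextKnot ℓ T m y) := by
  unfold nextKnot
  split_ifs with h
  · exact h
  · exact (hT _).trans (hmono (le_max_right _ _))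

lemma knot_add_le (m : ℕ) : knot ℓ T m + 2 * gap ℓ T m + 1 ≤ knot ℓ T (m + 1) :=
  le_nextKnot ℓ T _ _

lemma two_mul_gap_add_one_le (m : ℕ) : 2 * gap ℓ T m + 1 ≤ gap ℓ T (m + 1) := by
  linarith [knot_add_le ℓ T m, gap_succ ℓ T m]

lemma gap_nonneg (m : ℕ) : 0 ≤ gap ℓ T m := by
  induction m with
  | zero => exact le_rfl
  | succ m ih => linarith [two_mul_gap_add_one_le ℓ T m]

lemma one_le_gap_succ (m : ℕ) : 1 ≤ gap ℓ T (m + 1) := by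
  linarith [two_mul_gap_add_one_le ℓ T m, gap_nonneg ℓ T m]

lemma knot_lt_knot_succ (m : ℕ) : knot ℓ T m < knot ℓ T (m + 1) := by
  linarith [one_le_gap_succ ℓ T m, gap_succ ℓ T m]

lemma knot_strictMono : StrictMono (knot ℓ T) := strictMono_nat_of_lt_succ (knot_lt_knot_succ ℓ T)

lemma natCast_le_knot (m : ℕ) : (m : ℝ) ≤ knot ℓ T m := by
  induction m with
  | zero => simp [knot_zero ℓ T]
  | succ m ih =>
    push_cast
    linarith [knot_add_le ℓ T m, gap_nonneg ℓ T m]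

lemma knot_nonneg (m : ℕ) : 0 ≤ knot ℓ T m := (Nat.cast_nonneg m).trans (natCast_le_knot ℓ T m)

lemma knot_le_gap_succ (m : ℕ) : knot ℓ T m ≤ gap ℓ T (m + 1) := by
  induction m with
  | zero => linarith [one_le_gap_succ ℓ T 0, knot_zero ℓ T]
  | succ m ih =>
    linarith [two_mul_gap_add_one_le ℓ T (m + 1), gap_succ ℓ T m]

lemma slope_pos (m : ℕ) : 0 < slope ℓ T m :=
  div_pos (by positivity) (one_pos.trans_le (one_le_gap_succ ℓ T m))

lemma slope_succ_le (m : ℕ) : slope ℓ T (m + 1) ≤ slope ℓ T m := by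
  have h1 := one_le_gap_succ ℓ T m
  have h2 := two_mul_gap_add_one_le ℓ T (m + 1)
  rw [slope, slope, div_le_div_iff₀ (by linarith) (by linarith), pow_succ]
  nlinarith [pow_pos (two_pos (α := ℝ)) m]

lemma slope_antitone : Antitone (slope ℓ T) := antitone_nat_of_succ_le (slope_succ_le ℓ T)

lemma line_knot (m : ℕ) : line ℓ T m (knot ℓ T m) = 2 ^ m - 1 := by
  simp [line]

lemma line_sub_line_succ (m : ℕ) (y : ℝ) :
    line ℓ T m y - line ℓ T (m + 1) y =
      (slope ℓ T m - slope ℓ T (m + 1)) * (y - knot ℓ T (m + 1)) := by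
  have hg : gap ℓ T (m + 1) ≠ 0 := (one_pos.trans_le (one_le_gap_succ ℓ T m)).ne'
  have hslope : slope ℓ T m * (knot ℓ T (m + 1) - knot ℓ T m) = 2 ^ m := by
    rw [slope, ← gap_succ ℓ T, div_mul_cancel₀ _ hg]
  simp only [line, pow_succ]
  linear_combination hslope

lemma line_bddBelow (y : ℝ) : BddBelow (range fun m => line ℓ T m y) := by
  refine ⟨-1 + min 0 (slope ℓ T 0 * y), ?_⟩
  rintro _ ⟨m, rfl⟩
  have hslope_knot : slope ℓ T m * knot ℓ T m ≤ 2 ^ m := by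
    rw [slope, div_mul_eq_mul_div, div_le_iff₀ (one_pos.trans_le (one_le_gap_succ ℓ T m))]
    exact mul_le_mul_of_nonneg_left (knot_le_gap_succ ℓ T m) (by positivity)
  have hslope_y : min 0 (slope ℓ T 0 * y) ≤ slope ℓ T m * y := by
    rcases le_total 0 y with hy | hy
    · exact (min_le_left _ _).trans (mul_nonneg (slope_pos ℓ T m).le hy)
    · exact (min_le_right _ _).trans
        (mul_le_mul_of_nonpos_right (slope_antitone ℓ T (Nat.zero_le m)) hy)
  simp only [line]
  linarith

lemma line_le_line_of_le {k m : ℕ} (hkm : k ≤ m) {y : ℝ} (hy : knot ℓ T m ≤ y) :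
    line ℓ T m y ≤ line ℓ T k y := by
  induction m, hkm using Nat.le_induction with
  | base => exact le_rfl
  | succ m hkm ih =>
    have hdiff := line_sub_line_succ ℓ T m y
    have hslope := slope_succ_le ℓ T m
    refine le_trans ?_ (ih ((knot_lt_knot_succ ℓ T m).le.trans hy))
    nlinarith

lemma line_le_line_of_ge {k m : ℕ} (hkm : k ≤ m) {y : ℝ} (hy : y ≤ knot ℓ T (k + 1)) :
    line ℓ T k y ≤ line ℓ T m y := by
  induction m, hkm using Nat.le_induction with
  | base => exact le_rfl
  | succ m hkm ih =>
    have hdiff := line_sub_line_succ ℓ T m y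
    have hslope := slope_succ_le ℓ T m
    have hym : y ≤ knot ℓ T (m + 1) := hy.trans ((knot_strictMono ℓ T).monotone (by omega))
    refine ih.trans ?_
    nlinarith

end Regularizer

open Regularizer

noncomputable def regularizer (ℓ T : ℝ → ℝ) (y : ℝ) : ℝ := ⨅ m, line ℓ T m y

section Regularizer

variable (ℓ T : ℝ → ℝ)

lemma regularizer_le_line (m : ℕ) (y : ℝ) : regularizer ℓ T y ≤ line ℓ T m y :=
  ciInf_le (line_bddBelow ℓ T y) m

lemma regularizer_knot (m : ℕ) : regularizer ℓ T (knot ℓ T m) = 2 ^ m - 1 := by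
  refine le_antisymm ((regularizer_le_line ℓ T m _).trans_eq (line_knot ℓ T m))
    (le_ciInf fun k => ?_)
  rw [← line_knot ℓ T m]
  rcases le_total k m with hkm | hmk
  · exact line_le_line_of_le ℓ T hkm le_rfl
  · exact line_le_line_of_ge ℓ T hmk (knot_lt_knot_succ ℓ T m).le

lemma regularizer_zero : regularizer ℓ T 0 = 0 := by
  simpa [knot_zero ℓ T] using regularizer_knot ℓ T 0

lemma regularizer_monotone : Monotone (regularizer ℓ T) := fun x y hxy =>
  le_ciInf fun m => (regularizer_le_line ℓ T m x).trans
    (by simp only [line]; nlinarith [slope_pos ℓ T m])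

lemma regularizer_concaveOn : ConcaveOn ℝ univ (regularizer ℓ T) := by
  refine ⟨convex_univ, fun x _ y _ a b ha hb hab => le_ciInf fun m => ?_⟩
  have hline : line ℓ T m (a • x + b • y) = a * line ℓ T m x + b * line ℓ T m y := by
    simp only [line, smul_eq_mul]
    linear_combination (slope ℓ T m * knot ℓ T m - 2 ^ m + 1) * hab
  rw [hline, smul_eq_mul, smul_eq_mul]
  gcongr <;> exact regularizer_le_line ℓ T m _

variable {ℓ}

lemma two_pow_sub_two_le_ell_knot (hmono : Monotone ℓ) (hT : ∀ v, v ≤ ℓ (T v)) (h0 : 0 ≤ ℓ 0) :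
    ∀ n : ℕ, (2 : ℝ) ^ (n + 1) - 2 ≤ ℓ (knot ℓ T n)
  | 0 => by simpa [knot_zero] using h0
  | n + 1 => by
    rw [knot_succ]
    linarith [le_ell_nextKnot ℓ T hmono hT n (knot ℓ T n + 2 * gap ℓ T n + 1)]

lemma half_regularizer_knot_succ_sub_le (hmono : Monotone ℓ) (hT : ∀ v, v ≤ ℓ (T v))
    (h0 : 0 ≤ ℓ 0) (n : ℕ) :
    1 / 2 * regularizer ℓ T (knot ℓ T (n + 1)) - ℓ (knot ℓ T n) ≤ 3 / 2 - n := by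
  have hℓ := two_pow_sub_two_le_ell_knot T hmono hT h0 n
  have hn : (n : ℝ) ≤ 2 ^ n := by exact_mod_cast (Nat.lt_two_pow_self).le
  rw [regularizer_knot, pow_succ] at *
  linarith

lemma knot_le_mul_two_pow (hmono : Monotone ℓ) {M : ℕ}
    (hlarge : ∀ m ≥ M, (2 : ℝ) ^ (m + 2) ≤ ℓ (knot ℓ T m)) (k : ℕ) :
    knot ℓ T (M + k) ≤ (knot ℓ T M + 2 * (gap ℓ T M + 1)) * 2 ^ k := by
  -- From `M` on, `nextKnot` never jumps, so the gaps exactly double.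
  have hstep (k : ℕ) : knot ℓ T (M + k + 1) = knot ℓ T (M + k) + 2 * gap ℓ T (M + k) + 1 :=
    nextKnot_of_le ℓ T ((hlarge (M + k) (by omega)).trans
      (hmono (show knot ℓ T (M + k) ≤ knot ℓ T (M + k) + 2 * gap ℓ T (M + k) + 1 by
        linarith [gap_nonneg ℓ T (M + k)])))
  have hgap (k : ℕ) : gap ℓ T (M + k) + 1 = 2 ^ k * (gap ℓ T M + 1) := by
    induction k with
    | zero => simp
    | succ k ih =>
      rw [← add_assoc, gap_succ, hstep, pow_succ]
      linarith
  have hD : 2 * (gap ℓ T M + 1) ≤ knot ℓ T M + 2 * (gap ℓ T M + 1) := by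
    linarith [knot_nonneg ℓ T M]
  induction k with
  | zero => simp only [add_zero, pow_zero, mul_one]; linarith [gap_nonneg ℓ T M]
  | succ k ih =>
    have hk := hgap (k + 1)
    rw [← add_assoc, gap_succ, pow_succ] at hk
    rw [← add_assoc, pow_succ]
    nlinarith [mul_le_mul_of_nonneg_right hD (pow_pos (two_pos (α := ℝ)) k).le]

lemma lt_mul_ell_of_le_ell_knot (hmono : Monotone ℓ) {M : ℕ}
    (hlarge : ∀ m ≥ M, (2 : ℝ) ^ (m + 2) ≤ ℓ (knot ℓ T m)) {t : ℝ} (ht : knot ℓ T M ≤ t) :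
    t < (knot ℓ T M + 2 * (gap ℓ T M + 1)) * ℓ t := by
  obtain ⟨k, hk⟩ : ∃ k, t < knot ℓ T (M + k) := (exists_nat_gt t).imp fun k hk =>
    hk.trans_le ((Nat.cast_le.2 (Nat.le_add_left k M)).trans (natCast_le_knot ℓ T _))
  induction k with
  | zero => rw [add_zero] at hk; linarith
  | succ k ih =>
    rcases lt_or_ge t (knot ℓ T (M + k)) with h | h
    · exact ih h
    have hℓ : (2 : ℝ) ^ (k + 1) ≤ ℓ t := (pow_le_pow_right₀ one_le_two (by omega)).trans
      ((hlarge (M + k) (by omega)).trans (hmono h))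
    have hD : 0 ≤ knot ℓ T M + 2 * (gap ℓ T M + 1) := by
      linarith [knot_nonneg ℓ T M, gap_nonneg ℓ T M]
    calc t < (knot ℓ T M + 2 * (gap ℓ T M + 1)) * 2 ^ (k + 1) :=
          hk.trans_le (knot_le_mul_two_pow T hmono hlarge (k + 1))
      _ ≤ _ := by gcongr

lemma exists_ell_knot_lt (hmono : Monotone ℓ)
    (hsub : ∀ ε > (0 : ℝ), ∀ t₀, ∃ t ≥ t₀, ℓ t < ε * t) (M : ℕ) :
    ∃ m ≥ M, ℓ (knot ℓ T m) < 2 ^ (m + 2) := by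
  by_contra! hlarge
  set D := knot ℓ T M + 2 * (gap ℓ T M + 1)
  have hD : 0 < D := by linarith [knot_nonneg ℓ T M, gap_nonneg ℓ T M]
  obtain ⟨t, ht₀, ht⟩ := hsub D⁻¹ (inv_pos.2 hD) (knot ℓ T M)
  have := lt_mul_ell_of_le_ell_knot T hmono hlarge ht₀
  rw [inv_mul_eq_div, lt_div_iff₀ hD] at ht
  linarith

lemma exists_le_five_mul_regularizer_sub (hmono : Monotone ℓ)
    (hsub : ∀ ε > (0 : ℝ), ∀ t₀, ∃ t ≥ t₀, ℓ t < ε * t) (M : ℝ) :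
    ∃ t, M ≤ 5 * regularizer ℓ T t - ℓ t := by
  obtain ⟨N, hN⟩ := exists_nat_ge (M + 5)
  obtain ⟨m, hmN, hm⟩ := exists_ell_knot_lt T hmono hsub N
  have hm2 : (m : ℝ) ≤ 2 ^ m := by exact_mod_cast (Nat.lt_two_pow_self).le
  have hNm : (N : ℝ) ≤ m := Nat.cast_le.2 hmN
  refine ⟨knot ℓ T m, ?_⟩
  rw [regularizer_knot, pow_add] at *
  linarith

end Regularizer

theorem stmt4_general {Ω : Type*} [MeasurableSpace Ω] (μ : Measure Ω) [IsProbabilityMeasure μ]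
    (X : Ω → ℝ)
    (hheavy : ∀ s > (0 : ℝ), ∫⁻ ω, ENNReal.ofReal (Real.exp (s * X ω)) ∂μ = ⊤) :
    ∃ (a b : ℝ) (hstar : ℝ → ℝ), 0 < a ∧ a < b ∧
      ConcaveOn ℝ (Ici 0) hstar ∧ hstar 0 = 0 ∧ (∀ x ≥ (0 : ℝ), 0 ≤ hstar x) ∧
      (∫⁻ ω, ENNReal.ofReal (Real.exp (a * hstar (X ω))) ∂μ < ⊤) ∧
      (∫⁻ ω, ENNReal.ofReal (Real.exp (b * hstar (X ω))) ∂μ = ⊤) := by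
  have hpos := innerTail_pos hheavy
  set ℓ := tailRate μ X
  have hmono : Monotone ℓ := tailRate_monotone hpos
  have hexp (t : ℝ) : innerTail μ X t = ENNReal.ofReal (Real.exp (-ℓ t)) :=
    innerTail_eq_exp_neg_tailRate (hpos t)
  choose T hT using exists_le_tailRate hpos
  set h := regularizer ℓ T
  have hh_mono : Monotone h := regularizer_monotone ℓ T
  refine ⟨1 / 2, 5, h, by norm_num, by norm_num,
    (regularizer_concaveOn ℓ T).subset (subset_univ _) (convex_Ici 0), regularizer_zero ℓ T,
    fun x hx => (regularizer_zero ℓ T).symm.trans_le (hh_mono hx), ?_, ?_⟩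
  · refine lintegral_exp_lt_top_of_innerTail_le (ψ := fun x => 1 / 2 * h x) (C := 3 / 2)
      (fun _ _ hxy => mul_le_mul_of_nonneg_left (hh_mono hxy) (by norm_num))
      (fun x => (exists_nat_ge x).imp fun n hn => hn.trans (natCast_le_knot ℓ T n)) fun n => ?_
    have := half_regularizer_knot_succ_sub_le T hmono hT (tailRate_nonneg 0) n
    rw [hexp]
    exact ENNReal.ofReal_le_ofReal (Real.exp_le_exp.2 (by linarith))
  · refine lintegral_exp_eq_top_of_le_innerTail (ψ := fun x => 5 * h x)
      (fun _ _ hxy => mul_le_mul_of_nonneg_left (hh_mono hxy) (by norm_num)) fun M => ?_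
    obtain ⟨t, ht⟩ := exists_le_five_mul_regularizer_sub T hmono
      (fun _ hε t₀ => exists_tailRate_lt hheavy hε t₀) M
    refine ⟨t, ?_⟩
    rw [hexp]
    exact ENNReal.ofReal_le_ofReal (Real.exp_le_exp.2 (by linarith))

theorem stmt4 {Ω : Type*} [MeasurableSpace Ω] (μ : Measure Ω) [IsProbabilityMeasure μ]
    (X : Ω → ℝ) (hXnn : ∀ ω, 0 ≤ X ω)
    (hub : ∀ a > (0 : ℝ), 0 < μ {ω | X ω > a})
    (hheavy : ∀ s > (0 : ℝ), ∫⁻ ω, ENNReal.ofReal (Real.exp (s * X ω)) ∂μ = ⊤) :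
    ∃ (a b : ℝ) (hstar : ℝ → ℝ), 0 < a ∧ a < b ∧
      ConcaveOn ℝ (Ici 0) hstar ∧ hstar 0 = 0 ∧ (∀ x ≥ (0 : ℝ), 0 ≤ hstar x) ∧
      (∫⁻ ω, ENNReal.ofReal (Real.exp (a * hstar (X ω))) ∂μ < ⊤) ∧
      (∫⁻ ω, ENNReal.ofReal (Real.exp (b * hstar (X ω))) ∂μ = ⊤) :=
  stmt4_general μ X hheavy
end

section
/- Let X and Y be positive, independent random variables, both essentially unbounded, and let h : [0,∞) → [0,∞) be continuous with h(x) → ∞ as x → ∞. If h(a+b) ≤ h(a) + h(b) for all a, b > 0 (subadditivity), then I_h(X+Y) = min(I_h(X), I_h(Y)), where I_h(Z) := liminf_{x→∞} (-log P(Z > x))/h(x). -/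
open MeasureTheory Filter Set

open ProbabilityTheory Real Topology

/-!
Since `X, Y > 0`, the tail of `X + Y` dominates those of `X` and `Y`, which gives `≤`.
Conversely, let `0 ≤ s < t < min (I_h X) (I_h Y)`, so that both tails are eventually
`≤ exp (-t h x)`. As `h` is continuous and tends to `∞`, the first point `z` where `h` reaches a
level `v` satisfies `{h X > v} ⊆ {X > z - 1}` and `h (z - 1) ≥ v - h 1`, so
`P (h X > v) ≲ exp (-t v)` and `E exp (s h X) < ∞`. Conditioning on `X` and using
`h x ≤ h (x - X) + h X`,
`P (X + Y > x) ≤ exp (-s h x) E exp (s h X) + P (X > x - M) ≲ exp (-s h x)`,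
hence `I_h (X + Y) ≥ s`.
-/

-- `Real.log 0 = 0`: a vanishing tail makes the quotient `0`, not `+∞`.
noncomputable def tailOrder {Ω : Type*} [MeasurableSpace Ω] (μ : Measure Ω) (h : ℝ → ℝ)
    (Z : Ω → ℝ) : EReal :=
  liminf (fun x : ℝ => ((-Real.log (μ {ω | x < Z ω}).toReal / h x : ℝ) : EReal)) atTop

section

variable {Ω : Type*} [MeasurableSpace Ω] {μ : Measure Ω} {h : ℝ → ℝ}

lemma exists_isLeast_le_apply (hcont : ContinuousOn h (Ici 0))
    (htop : Tendsto h atTop atTop) (v : ℝ) : ∃ z, IsLeast {y | 0 ≤ y ∧ v ≤ h y} z := by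
  have hclosed : IsClosed {y | 0 ≤ y ∧ v ≤ h y} :=
    hcont.preimage_isClosed_of_isClosed isClosed_Ici isClosed_Ici
  obtain ⟨y, hvy, hy⟩ := ((htop.eventually_ge_atTop v).and (eventually_ge_atTop 0)).exists
  exact ⟨_, hclosed.isLeast_csInf ⟨y, hy, hvy⟩ ⟨0, fun _ hz => hz.1⟩⟩

lemma ContinuousOn.measurable_comp_of_nonneg (hcont : ContinuousOn h (Ici 0)) {Z : Ω → ℝ}
    (hZm : Measurable Z) (hZ : ∀ ω, 0 ≤ Z ω) : Measurable fun ω => h (Z ω) := by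
  have hext : Continuous fun t => h (max t 0) :=
    hcont.comp_continuous (continuous_id.max continuous_const) fun t => le_max_right t 0
  convert hext.measurable.comp hZm using 2 with ω
  simp [max_eq_left (hZ ω)]

lemma lintegral_exp_mul_lt_top_of_measure_lt_le {W : Ω → ℝ} (hWm : Measurable W)
    (hW : ∀ ω, 0 ≤ W ω) {s t K : ℝ} (hs : 0 ≤ s) (hst : s < t)
    (hlevel : ∀ v, μ {ω | v < W ω} ≤ ENNReal.ofReal (exp (t * (K - v)))) :
    ∫⁻ ω, ENNReal.ofReal (exp (s * W ω)) ∂μ < ⊤ := by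
  set A : ℕ → Set Ω := fun n => {ω | (n : ℝ) - 1 < W ω}
  have hA : ∀ n, MeasurableSet (A n) := fun n => measurableSet_lt measurable_const hWm
  have hpt : ∀ ω, ENNReal.ofReal (exp (s * W ω))
      ≤ ∑' n : ℕ, (A n).indicator (fun _ => ENNReal.ofReal (exp (s * (n + 1)))) ω := by
    intro ω
    refine le_trans ?_ (ENNReal.le_tsum ⌊W ω⌋₊)
    have hmem : ω ∈ A ⌊W ω⌋₊ := by
      show (⌊W ω⌋₊ : ℝ) - 1 < W ω
      linarith [Nat.floor_le (hW ω)]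
    rw [indicator_of_mem hmem]
    gcongr
    exact (Nat.lt_floor_add_one _).le
  have hterm : ∀ n : ℕ, ENNReal.ofReal (exp (s * (n + 1))) * μ (A n)
      ≤ ENNReal.ofReal (exp (s + t * (K + 1))) * ENNReal.ofReal (exp (s - t)) ^ n := by
    intro n
    calc ENNReal.ofReal (exp (s * (n + 1))) * μ (A n)
        ≤ ENNReal.ofReal (exp (s * (n + 1))) * ENNReal.ofReal (exp (t * (K - (n - 1)))) := by
          gcongr
          exact hlevel _
      _ = ENNReal.ofReal (exp (s + t * (K + 1))) * ENNReal.ofReal (exp (s - t)) ^ n := by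
          rw [← ENNReal.ofReal_mul (exp_pos _).le, ← ENNReal.ofReal_pow (exp_pos _).le,
            ← ENNReal.ofReal_mul (exp_pos _).le, ← exp_add, ← exp_nat_mul, ← exp_add]
          ring_nf
  have hratio : ENNReal.ofReal (exp (s - t)) < 1 :=
    ENNReal.ofReal_lt_one.2 (exp_lt_one_iff.2 (by linarith))
  calc ∫⁻ ω, ENNReal.ofReal (exp (s * W ω)) ∂μ
      ≤ ∫⁻ ω, ∑' n : ℕ, (A n).indicator (fun _ => ENNReal.ofReal (exp (s * (n + 1)))) ω ∂μ :=
        lintegral_mono hpt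
    _ = ∑' n : ℕ, ENNReal.ofReal (exp (s * (n + 1))) * μ (A n) := by
        rw [lintegral_tsum fun n => (measurable_const.indicator (hA n)).aemeasurable]
        simp_rw [lintegral_indicator_const (hA _)]
    _ ≤ ∑' n : ℕ, ENNReal.ofReal (exp (s + t * (K + 1))) * ENNReal.ofReal (exp (s - t)) ^ n :=
        ENNReal.tsum_le_tsum hterm
    _ = ENNReal.ofReal (exp (s + t * (K + 1))) * (1 - ENNReal.ofReal (exp (s - t)))⁻¹ := by
        rw [ENNReal.tsum_mul_left, ENNReal.tsum_geometric]
    _ < ⊤ := ENNReal.mul_lt_top ENNReal.ofReal_lt_top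
        (ENNReal.inv_lt_top.2 (tsub_pos_of_lt hratio))

lemma exists_measure_lt_apply_le [IsProbabilityMeasure μ] {Z : Ω → ℝ} (hZ : ∀ ω, 0 ≤ Z ω)
    (hcont : ContinuousOn h (Ici 0)) (htop : Tendsto h atTop atTop)
    (hsub : ∀ a > (0 : ℝ), ∀ b > (0 : ℝ), h (a + b) ≤ h a + h b) {s : ℝ} (hs : 0 ≤ s)
    (htail : ∀ᶠ x in atTop, μ {ω | x < Z ω} ≤ ENNReal.ofReal (exp (-(s * h x)))) :
    ∃ K, ∀ v, μ {ω | v < h (Z ω)} ≤ ENNReal.ofReal (exp (s * (K - v))) := by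
  obtain ⟨M, hM⟩ := eventually_atTop.1 htail
  have hM0 := le_max_right M 0
  obtain ⟨K, hK⟩ := (isCompact_Icc (a := 0) (b := max M 0 + 1)).bddAbove_image
    (hcont.mono Icc_subset_Ici_self)
  refine ⟨K, fun v => ?_⟩
  rcases le_or_gt v K with hvK | hKv
  · exact prob_le_one.trans
      (ENNReal.one_le_ofReal.2 (one_le_exp (mul_nonneg hs (sub_nonneg.2 hvK))))
  obtain ⟨z, ⟨hz0, hvz⟩, hzleast⟩ := exists_isLeast_le_apply hcont htop v
  have hzM : max M 0 + 1 < z := by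
    by_contra! hle
    exact (hKv.trans_le hvz).not_ge (hK (mem_image_of_mem h ⟨hz0, hle⟩))
  have hvK : v - K ≤ h (z - 1) := by
    have hsplit := hsub (z - 1) (by linarith) 1 one_pos
    have h1 : h 1 ≤ K := hK (mem_image_of_mem h ⟨zero_le_one, by linarith⟩)
    rw [sub_add_cancel] at hsplit
    linarith
  calc μ {ω | v < h (Z ω)} ≤ μ {ω | z - 1 < Z ω} := measure_mono fun ω hω => by
        have := hzleast ⟨hZ ω, le_of_lt hω⟩
        show z - 1 < Z ω
        linarith
    _ ≤ ENNReal.ofReal (exp (-(s * h (z - 1)))) := hM _ (by linarith [le_max_left M 0])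
    _ ≤ ENNReal.ofReal (exp (s * (K - v))) :=
        ENNReal.ofReal_le_ofReal (exp_le_exp.2 (by nlinarith))

lemma lintegral_exp_mul_comp_lt_top [IsProbabilityMeasure μ] {Z : Ω → ℝ} (hZm : Measurable Z)
    (hZ : ∀ ω, 0 ≤ Z ω) (hnn : ∀ x ≥ (0 : ℝ), 0 ≤ h x) (hcont : ContinuousOn h (Ici 0))
    (htop : Tendsto h atTop atTop) (hsub : ∀ a > (0 : ℝ), ∀ b > (0 : ℝ), h (a + b) ≤ h a + h b)
    {s t : ℝ} (hs : 0 ≤ s) (hst : s < t)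
    (htail : ∀ᶠ x in atTop, μ {ω | x < Z ω} ≤ ENNReal.ofReal (exp (-(t * h x)))) :
    ∫⁻ ω, ENNReal.ofReal (exp (s * h (Z ω))) ∂μ < ⊤ := by
  obtain ⟨K, hK⟩ := exists_measure_lt_apply_le hZ hcont htop hsub (hs.trans hst.le) htail
  exact lintegral_exp_mul_lt_top_of_measure_lt_le (hcont.measurable_comp_of_nonneg hZm hZ)
    (fun ω => hnn _ (hZ ω)) hs hst hK

lemma ProbabilityTheory.IndepFun.measure_lt_add_eq_lintegral [IsFiniteMeasure μ] {X Y : Ω → ℝ}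
    (hind : IndepFun X Y μ) (hXm : Measurable X) (hYm : Measurable Y) (x : ℝ) :
    μ {ω | x < X ω + Y ω} = ∫⁻ ω, μ {ω' | x - X ω < Y ω'} ∂μ := by
  have hS : MeasurableSet {p : ℝ × ℝ | x < p.1 + p.2} :=
    measurableSet_lt measurable_const (measurable_fst.add measurable_snd)
  have hmono : Monotone fun a => μ {ω | x - a < Y ω} := fun a b hab =>
    measure_mono fun ω (hω : x - a < Y ω) => show x - b < Y ω by linarith
  calc μ {ω | x < X ω + Y ω} = μ.map (fun ω => (X ω, Y ω)) {p : ℝ × ℝ | x < p.1 + p.2} :=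
        (Measure.map_apply (hXm.prodMk hYm) hS).symm
    _ = ((μ.map X).prod (μ.map Y)) {p : ℝ × ℝ | x < p.1 + p.2} := by
        rw [hind.map_prod_eq_prod_map_map hXm.aemeasurable hYm.aemeasurable]
    _ = ∫⁻ a, μ {ω | x - a < Y ω} ∂μ.map X := by
        rw [Measure.prod_apply hS]
        refine lintegral_congr fun a => ?_
        rw [Measure.map_apply hYm (measurable_prodMk_left hS)]
        congr 1
        ext ω
        exact (sub_lt_iff_lt_add' (a := x) (b := a) (c := Y ω)).symm
    _ = ∫⁻ ω, μ {ω' | x - X ω < Y ω'} ∂μ := lintegral_map hmono.measurable hXm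

lemma exists_measure_lt_add_le [IsProbabilityMeasure μ] {X Y : Ω → ℝ} (hXpos : ∀ ω, 0 < X ω)
    (hXm : Measurable X) (hYm : Measurable Y) (hind : IndepFun X Y μ)
    (hsub : ∀ a > (0 : ℝ), ∀ b > (0 : ℝ), h (a + b) ≤ h a + h b) {s : ℝ} (hs : 0 ≤ s)
    (hmom : ∫⁻ ω, ENNReal.ofReal (exp (s * h (X ω))) ∂μ < ⊤)
    (hXtail : ∀ᶠ x in atTop, μ {ω | x < X ω} ≤ ENNReal.ofReal (exp (-(s * h x))))
    (hYtail : ∀ᶠ x in atTop, μ {ω | x < Y ω} ≤ ENNReal.ofReal (exp (-(s * h x)))) :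
    ∃ C, ∀ᶠ x in atTop, μ {ω | x < X ω + Y ω} ≤ ENNReal.ofReal (C * exp (-(s * h x))) := by
  obtain ⟨M, hM⟩ := eventually_atTop.1 ((hXtail.and hYtail).and (eventually_gt_atTop 0))
  have hM0 : 0 < M := (hM M le_rfl).2
  set m := (∫⁻ ω, ENNReal.ofReal (exp (s * h (X ω))) ∂μ).toReal
  refine ⟨m + exp (s * h M), ?_⟩
  filter_upwards [eventually_ge_atTop (2 * M)] with x hx
  have hshift : ∀ a > 0, a ≤ x - M →
      exp (-(s * h (x - a))) ≤ exp (-(s * h x)) * exp (s * h a) := fun a ha haM => by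
    have hsplit := hsub (x - a) (by linarith) a ha
    rw [sub_add_cancel] at hsplit
    rw [← exp_add]
    exact exp_le_exp.2 (by nlinarith)
  have hpt : ∀ ω, μ {ω' | x - X ω < Y ω'} ≤ ENNReal.ofReal (exp (-(s * h x)))
      * ENNReal.ofReal (exp (s * h (X ω))) + {ω | x - M < X ω}.indicator 1 ω := by
    intro ω
    by_cases hω : x - M < X ω
    · rw [indicator_of_mem (s := {ω | x - M < X ω}) hω]
      exact prob_le_one.trans le_add_self
    · refine le_add_right ((hM _ (by linarith)).1.2.trans ?_)
      rw [← ENNReal.ofReal_mul (exp_pos _).le]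
      exact ENNReal.ofReal_le_ofReal (hshift _ (hXpos ω) (not_lt.1 hω))
  have hfar : μ {ω | x - M < X ω} ≤ ENNReal.ofReal (exp (-(s * h x)) * exp (s * h M)) :=
    ((hM _ (by linarith)).1.1).trans (ENNReal.ofReal_le_ofReal (hshift M hM0 (by linarith)))
  have hXlt : MeasurableSet {ω | x - M < X ω} := measurableSet_lt measurable_const hXm
  calc μ {ω | x < X ω + Y ω} = ∫⁻ ω, μ {ω' | x - X ω < Y ω'} ∂μ :=
        hind.measure_lt_add_eq_lintegral hXm hYm x
    _ ≤ ∫⁻ ω, (ENNReal.ofReal (exp (-(s * h x))) * ENNReal.ofReal (exp (s * h (X ω)))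
          + {ω | x - M < X ω}.indicator 1 ω) ∂μ := lintegral_mono hpt
    _ = ENNReal.ofReal (exp (-(s * h x))) * ∫⁻ ω, ENNReal.ofReal (exp (s * h (X ω))) ∂μ
          + μ {ω | x - M < X ω} := by
        rw [lintegral_add_right _ (measurable_one.indicator hXlt),
          lintegral_const_mul' _ _ ENNReal.ofReal_ne_top, lintegral_indicator_one hXlt]
    _ ≤ ENNReal.ofReal (exp (-(s * h x))) * ENNReal.ofReal m
          + ENNReal.ofReal (exp (-(s * h x)) * exp (s * h M)) := by
        rw [ENNReal.ofReal_toReal hmom.ne]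
        gcongr
    _ = ENNReal.ofReal ((m + exp (s * h M)) * exp (-(s * h x))) := by
        rw [← ENNReal.ofReal_mul (exp_pos _).le, ← ENNReal.ofReal_add (by positivity)
          (by positivity)]
        ring_nf

lemma tailOrder_nonneg [IsProbabilityMeasure μ] (hh : ∀ᶠ x in atTop, 0 ≤ h x) (Z : Ω → ℝ) :
    0 ≤ tailOrder μ h Z := by
  refine le_liminf_of_le (by isBoundedDefault) ?_
  filter_upwards [hh] with x hx
  exact EReal.coe_nonneg.2 (div_nonneg (neg_nonneg.2 (log_nonpos measureReal_nonneg
    measureReal_le_one)) hx)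

lemma tailOrder_le_tailOrder_of_measure_le [IsFiniteMeasure μ] {Z W : Ω → ℝ}
    (hh : ∀ᶠ x in atTop, 0 ≤ h x) (hZ : ∀ᶠ x in atTop, 0 < μ {ω | x < Z ω})
    (hZW : ∀ x, μ {ω | x < Z ω} ≤ μ {ω | x < W ω}) : tailOrder μ h W ≤ tailOrder μ h Z := by
  refine liminf_le_liminf ?_
  filter_upwards [hh, hZ] with x hhx hZx
  refine EReal.coe_le_coe_iff.2 (div_le_div_of_nonneg_right (neg_le_neg (log_le_log ?_ ?_)) hhx)
  · exact ENNReal.toReal_pos hZx.ne' (measure_ne_top _ _)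
  · exact ENNReal.toReal_mono (measure_ne_top _ _) (hZW x)

lemma measure_lt_le_of_lt_tailOrder [IsFiniteMeasure μ] {Z : Ω → ℝ}
    (hh : ∀ᶠ x in atTop, 0 < h x) {s : ℝ} (hs : (s : EReal) < tailOrder μ h Z) :
    ∀ᶠ x in atTop, μ {ω | x < Z ω} ≤ ENNReal.ofReal (exp (-(s * h x))) := by
  filter_upwards [eventually_lt_of_lt_liminf hs, hh] with x hx hhx
  rw [EReal.coe_lt_coe_iff, lt_div_iff₀ hhx] at hx
  rcases eq_zero_or_pos (μ {ω | x < Z ω}) with h0 | h0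
  · simp [h0]
  rw [← ENNReal.ofReal_toReal (measure_ne_top μ _)]
  refine ENNReal.ofReal_le_ofReal ((log_lt_iff_lt_exp ?_).1 (by linarith)).le
  exact ENNReal.toReal_pos h0.ne' (measure_ne_top _ _)

lemma le_tailOrder_of_measure_lt_le [IsFiniteMeasure μ] {Z : Ω → ℝ}
    (htop : Tendsto h atTop atTop) (hZ : ∀ᶠ x in atTop, 0 < μ {ω | x < Z ω}) {s C : ℝ}
    (hC : ∀ᶠ x in atTop, μ {ω | x < Z ω} ≤ ENNReal.ofReal (C * exp (-(s * h x)))) :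
    (s : EReal) ≤ tailOrder μ h Z := by
  have hlim : Tendsto (fun x => ((s - log C / h x : ℝ) : EReal)) atTop (𝓝 (s : EReal)) := by
    have := ((tendsto_const_nhds (x := log C)).div_atTop htop).const_sub s
    rw [sub_zero] at this
    exact (continuous_coe_real_ereal.tendsto _).comp this
  refine hlim.liminf_eq.symm.le.trans (liminf_le_liminf ?_)
  filter_upwards [hZ, hC, htop.eventually_gt_atTop 0] with x hZx hCx hhx
  have hP : 0 < (μ {ω | x < Z ω}).toReal := ENNReal.toReal_pos hZx.ne' (measure_ne_top _ _)
  have hCpos : 0 < C * exp (-(s * h x)) := ENNReal.ofReal_pos.1 (hZx.trans_le hCx)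
  have hlog := log_le_log hP (ENNReal.toReal_le_of_le_ofReal hCpos.le hCx)
  rw [log_mul (pos_of_mul_pos_left hCpos (exp_pos _).le).ne' (exp_pos _).ne', log_exp] at hlog
  rw [EReal.coe_le_coe_iff, le_div_iff₀ hhx, sub_mul, div_mul_cancel₀ _ hhx.ne']
  linarith

lemma le_tailOrder_add [IsProbabilityMeasure μ] {X Y : Ω → ℝ} (hXpos : ∀ ω, 0 < X ω)
    (hY : ∀ ω, 0 ≤ Y ω) (hXub : ∀ a > (0 : ℝ), 0 < μ {ω | a < X ω}) (hXm : Measurable X)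
    (hYm : Measurable Y) (hind : IndepFun X Y μ) (hnn : ∀ x ≥ (0 : ℝ), 0 ≤ h x)
    (hcont : ContinuousOn h (Ici 0)) (htop : Tendsto h atTop atTop)
    (hsub : ∀ a > (0 : ℝ), ∀ b > (0 : ℝ), h (a + b) ≤ h a + h b) {s : ℝ} (hs : 0 ≤ s)
    (hsXY : (s : EReal) < min (tailOrder μ h X) (tailOrder μ h Y)) :
    (s : EReal) ≤ tailOrder μ h (fun ω => X ω + Y ω) := by
  have hh : ∀ᶠ x in atTop, 0 < h x := htop.eventually_gt_atTop 0
  obtain ⟨t, hst, htXY⟩ := EReal.exists_between_coe_real hsXY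
  have hmom := lintegral_exp_mul_comp_lt_top hXm (fun ω => (hXpos ω).le) hnn hcont htop hsub hs
    (EReal.coe_lt_coe_iff.1 hst)
    (measure_lt_le_of_lt_tailOrder hh (htXY.trans_le (min_le_left _ _)))
  obtain ⟨C, hC⟩ := exists_measure_lt_add_le hXpos hXm hYm hind hsub hs hmom
    (measure_lt_le_of_lt_tailOrder hh (hsXY.trans_le (min_le_left _ _)))
    (measure_lt_le_of_lt_tailOrder hh (hsXY.trans_le (min_le_right _ _)))
  refine le_tailOrder_of_measure_lt_le htop ?_ hC
  filter_upwards [eventually_gt_atTop 0] with x hx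
  exact (hXub x hx).trans_le (measure_mono fun ω (hω : x < X ω) =>
    show x < X ω + Y ω by linarith [hY ω])

end

theorem stmt6 {Ω : Type*} [MeasurableSpace Ω] (μ : Measure Ω) [IsProbabilityMeasure μ]
    (X Y : Ω → ℝ) (hXpos : ∀ ω, 0 < X ω) (hYpos : ∀ ω, 0 < Y ω)
    (hXub : ∀ a > (0 : ℝ), 0 < μ {ω | X ω > a})
    (hYub : ∀ a > (0 : ℝ), 0 < μ {ω | Y ω > a})
    (hXm : Measurable X) (hYm : Measurable Y)
    (hind : ProbabilityTheory.IndepFun X Y μ)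
    (h : ℝ → ℝ) (hnn : ∀ x ≥ (0 : ℝ), 0 ≤ h x)
    (hcont : ContinuousOn h (Ici 0))
    (htop : Tendsto h atTop atTop)
    (hsub : ∀ a > (0 : ℝ), ∀ b > (0 : ℝ), h (a + b) ≤ h a + h b) :
    Filter.liminf
        (fun x : ℝ => ((-Real.log (μ {ω | X ω + Y ω > x}).toReal / h x : ℝ) : EReal)) atTop
      = min
        (Filter.liminf
          (fun x : ℝ => ((-Real.log (μ {ω | X ω > x}).toReal / h x : ℝ) : EReal)) atTop)
        (Filter.liminf
          (fun x : ℝ => ((-Real.log (μ {ω | Y ω > x}).toReal / h x : ℝ) : EReal)) atTop) := by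
  change tailOrder μ h (fun ω => X ω + Y ω) = min (tailOrder μ h X) (tailOrder μ h Y)
  have hh : ∀ᶠ x in atTop, 0 ≤ h x := (eventually_ge_atTop 0).mono hnn
  refine le_antisymm (le_min ?_ ?_) (le_of_forall_lt_imp_le_of_dense fun c hc => ?_)
  · exact tailOrder_le_tailOrder_of_measure_le hh ((eventually_gt_atTop 0).mono hXub) fun x =>
      measure_mono fun ω (hω : x < X ω) => show x < X ω + Y ω by linarith [hYpos ω]
  · exact tailOrder_le_tailOrder_of_measure_le hh ((eventually_gt_atTop 0).mono hYub) fun x =>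
      measure_mono fun ω (hω : x < Y ω) => show x < X ω + Y ω by linarith [hXpos ω]
  rcases lt_or_ge c 0 with hc0 | hc0
  · exact hc0.le.trans (tailOrder_nonneg hh _)
  obtain ⟨s, hcs, hs⟩ := EReal.exists_between_coe_real hc
  have hs0 : 0 ≤ s := EReal.coe_nonneg.1 (hc0.trans hcs.le)
  exact hcs.le.trans (le_tailOrder_add hXpos (fun ω => (hYpos ω).le) hXub hXm hYm hind hnn hcont
    htop hsub hs0 hs)
end

section
/- Let n ≥ 2 and X, X_1, ..., X_n be positive heavy-tailed i.i.d. random variables with common continuous distribution function F, and let g : ℝⁿ → ℝ be increasing in each coordinate with each coordinatewise section tending to ∞, and suppose the diagonal g_d(x) := g(x,...,x) has an inverse g_d^{-1}. Set ĥ := R_X ∘ g_d^{-1} where R_X(x) = -log P(X > x). Then 1 ≤ liminf_{x→∞} R_{g(X_1,...,X_n)}(x)/ĥ(x) ≤ n; in particular there is c ∈ [1, n] such that c·(R_X ∘ g_d^{-1}) is a natural scale of g(X_1,...,X_n). -/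
/-!
Write `q(t) = P(X > t)`. Since `g` is coordinatewise increasing, `g(X₁,…,Xₙ) > g_d(t)` forces some
`Xᵢ > t`, and is forced by all `Xᵢ > t`; by the union bound and independence
`q(t)ⁿ ≤ P(g(X₁,…,Xₙ) > g_d(t)) ≤ n q(t)`. Taking `-log` at `t = g_d⁻¹(x)` squeezes `R_{g(X₁,…,Xₙ)}(x)`
between `ĥ(x) - log n` and `n ĥ(x)`, and `ĥ(x) → ∞`, so the liminf of the ratio lies in `[1, n]`.
-/

open MeasureTheory Filter Set ProbabilityTheory
open scoped ENNReal Topology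

lemma monotone_of_monotone_update {ι α β : Type*} [Fintype ι] [DecidableEq ι] [Preorder α]
    [Preorder β] {g : (ι → α) → β} (hg : ∀ v i, Monotone fun t => g (Function.update v i t)) :
    Monotone g := by
  intro v w hvw
  have h_piecewise : ∀ s : Finset ι, g v ≤ g (s.piecewise w v) := by
    intro s
    induction s using Finset.induction_on with
    | empty => simp
    | insert j s hj ih =>
      refine ih.trans ?_
      rw [Finset.piecewise_insert]
      conv_lhs => rw [← Function.update_eq_self j (s.piecewise w v)]
      refine hg _ j ?_
      rw [Finset.piecewise_eq_of_notMem _ _ _ hj]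
      exact hvw j
  simpa using h_piecewise Finset.univ

section Tails

variable {Ω ι : Type*} [MeasurableSpace Ω] {μ : Measure Ω} [Fintype ι]
  {g : (ι → ℝ) → ℝ} {Xs : ι → Ω → ℝ}

lemma measure_diag_lt_le_sum (hg : Monotone g) (t : ℝ) :
    μ {ω | g (fun _ => t) < g (fun i => Xs i ω)} ≤ ∑ i, μ {ω | t < Xs i ω} := by
  refine (measure_mono fun ω hω => ?_).trans (measure_iUnion_fintype_le μ _)
  by_contra hnot
  simp only [mem_iUnion, mem_ofPred_eq, not_exists, not_lt] at hnot
  exact (hg hnot).not_gt hω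

lemma prod_le_measure_diag_lt [Nonempty ι] (hg : Monotone g)
    (hgd : StrictMono fun t => g fun _ => t) (hind : iIndepFun Xs μ) (t : ℝ) :
    ∏ i, μ {ω | t < Xs i ω} ≤ μ {ω | g (fun _ => t) < g (fun i => Xs i ω)} := by
  change ∏ i, μ (Xs i ⁻¹' Ioi t) ≤ _
  rw [← hind.measure_inter_preimage_eq_mul Finset.univ (fun _ _ => measurableSet_Ioi)]
  refine measure_mono fun ω hω => ?_
  simp only [Finset.mem_univ, iInter_true, mem_iInter, mem_preimage, mem_Ioi] at hω
  have hmin : t < Finset.univ.inf' Finset.univ_nonempty (fun i => Xs i ω) :=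
    (Finset.lt_inf'_iff _).2 fun i _ => hω i
  exact (hgd hmin).trans_le (hg fun i => Finset.inf'_le _ (Finset.mem_univ i))

end Tails

lemma tendsto_measure_lt_atTop {Ω : Type*} [MeasurableSpace Ω] (μ : Measure Ω) [IsFiniteMeasure μ]
    {X : Ω → ℝ} (hX : Measurable X) : Tendsto (fun t => μ {ω | t < X ω}) atTop (𝓝 0) := by
  have h := tendsto_measure_iInter_atTop (μ := μ) (s := fun t : ℝ => {ω | t < X ω})
    (fun t => (hX measurableSet_Ioi).nullMeasurableSet)
    (fun _ _ hst _ hω => hst.trans_lt hω) ⟨0, measure_ne_top μ _⟩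
  rwa [iInter_eq_empty_iff.2 fun ω => ⟨X ω, fun h => lt_irrefl (X ω) h⟩, measure_empty] at h

lemma tendsto_neg_log_measure_lt_atTop {Ω : Type*} [MeasurableSpace Ω] (μ : Measure Ω)
    [IsFiniteMeasure μ] {X : Ω → ℝ} (hX : Measurable X) (hpos : ∀ t, 0 < μ {ω | t < X ω}) :
    Tendsto (fun t => -Real.log (μ {ω | t < X ω}).toReal) atTop atTop := by
  have h0 := (ENNReal.tendsto_toReal ENNReal.zero_ne_top).comp (tendsto_measure_lt_atTop μ hX)
  rw [ENNReal.toReal_zero] at h0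
  refine tendsto_neg_atBot_atTop.comp (Real.tendsto_log_nhdsGT_zero.comp ?_)
  exact tendsto_nhdsWithin_of_tendsto_nhds_of_eventually_within _ h0
    (Eventually.of_forall fun t => ENNReal.toReal_pos (hpos t).ne' (measure_ne_top μ _))

lemma neg_log_sub_log_le_neg_log {p q n : ℝ} (hq : 0 < q) (hn : 0 < n) (hp : 0 < p)
    (h : p ≤ n * q) : -Real.log q - Real.log n ≤ -Real.log p := by
  have := Real.log_le_log hp h
  rw [Real.log_mul hn.ne' hq.ne'] at this
  linarith

lemma neg_log_le_mul_neg_log {p q : ℝ} (n : ℕ) (hq : 0 < q) (h : q ^ n ≤ p) :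
    -Real.log p ≤ n * -Real.log q := by
  have := Real.log_le_log (pow_pos hq n) h
  rw [Real.log_pow] at this
  linarith

section Liminf

variable {α : Type*} {l : Filter α} {a b : α → ℝ}

lemma one_le_liminf_div_of_sub_le [NeBot l] (C : ℝ) (hb : Tendsto b l atTop)
    (h : ∀ᶠ x in l, b x - C ≤ a x) : 1 ≤ liminf (fun x => ((a x / b x : ℝ) : EReal)) l := by
  have hlim : Tendsto (fun x => ((1 - C / b x : ℝ) : EReal)) l (𝓝 1) := by
    have := ((tendsto_const_nhds : Tendsto (fun _ => C) l (𝓝 C)).div_atTop hb).const_sub (1 : ℝ)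
    rw [sub_zero] at this
    exact_mod_cast (continuous_coe_real_ereal.tendsto 1).comp this
  rw [← hlim.liminf_eq]
  refine liminf_le_liminf ?_
  filter_upwards [h, hb.eventually_gt_atTop 0] with x hx hbx
  rw [EReal.coe_le_coe_iff, one_sub_div hbx.ne']
  gcongr

lemma liminf_div_le_of_le_mul [NeBot l] (K : ℝ) (hb : ∀ᶠ x in l, 0 < b x)
    (h : ∀ᶠ x in l, a x ≤ K * b x) : liminf (fun x => ((a x / b x : ℝ) : EReal)) l ≤ K := by
  refine liminf_le_of_frequently_le (Eventually.frequently ?_)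
  filter_upwards [hb, h] with x hbx hx
  exact EReal.coe_le_coe_iff.2 ((div_le_iff₀ hbx).2 hx)

lemma liminf_div_const_mul [NeBot l] {c : ℝ} (hc : 0 < c) :
    liminf (fun x => ((a x / (c * b x) : ℝ) : EReal)) l =
      ((c⁻¹ : ℝ) : EReal) * liminf (fun x => ((a x / b x : ℝ) : EReal)) l := by
  rw [← EReal.liminf_const_mul_of_nonneg_of_ne_top (by exact_mod_cast (inv_pos.2 hc).le)
    (EReal.coe_ne_top _)]
  congr with x
  rw [← EReal.coe_mul, div_mul_eq_div_div_swap, div_eq_inv_mul]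

lemma exists_mem_Icc_liminf_div_const_mul_eq_one [NeBot l] {m M : ℝ} (hm : 0 < m)
    (h₁ : (m : EReal) ≤ liminf (fun x => ((a x / b x : ℝ) : EReal)) l)
    (h₂ : liminf (fun x => ((a x / b x : ℝ) : EReal)) l ≤ M) :
    ∃ c ∈ Icc m M, liminf (fun x => ((a x / (c * b x) : ℝ) : EReal)) l = 1 := by
  obtain ⟨c, hc⟩ : ∃ c : ℝ, liminf (fun x => ((a x / b x : ℝ) : EReal)) l = c :=
    ⟨_, (EReal.coe_toReal (h₂.trans_lt (EReal.coe_lt_top M)).ne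
      ((EReal.bot_lt_coe m).trans_le h₁).ne').symm⟩
  rw [hc, EReal.coe_le_coe_iff] at h₁ h₂
  refine ⟨c, ⟨h₁, h₂⟩, ?_⟩
  rw [liminf_div_const_mul (hm.trans_le h₁), hc, ← EReal.coe_mul,
    inv_mul_cancel₀ (hm.trans_le h₁).ne', EReal.coe_one]

end Liminf

theorem stmt11_general {Ω : Type*} [MeasurableSpace Ω] (μ : Measure Ω) [IsProbabilityMeasure μ]
    (n : ℕ) (hn : 2 ≤ n) (X : Ω → ℝ) (Xs : Fin n → Ω → ℝ)
    (hXm : Measurable X) (hXsm : ∀ i, Measurable (Xs i))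
    (hub : ∀ a > (0 : ℝ), 0 < μ {ω | X ω > a})
    (hident : ∀ i, Measure.map (Xs i) μ = Measure.map X μ)
    (hindep : ProbabilityTheory.iIndepFun Xs μ)
    (g : (Fin n → ℝ) → ℝ)
    (hmono : ∀ (v : Fin n → ℝ) (i : Fin n), Monotone (fun t => g (Function.update v i t)))
    (ginv : ℝ → ℝ)
    (hinv1 : ∀ x : ℝ, ginv (g (fun _ => x)) = x)
    (hinv2 : ∀ x : ℝ, g (fun _ => ginv x) = x) :
    (1 : EReal) ≤ Filter.liminf
        (fun x : ℝ =>
          ((-Real.log (μ {ω | g (fun i => Xs i ω) > x}).toReal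
              / -Real.log (μ {ω | X ω > ginv x}).toReal : ℝ) : EReal)) atTop ∧
    Filter.liminf
        (fun x : ℝ =>
          ((-Real.log (μ {ω | g (fun i => Xs i ω) > x}).toReal
              / -Real.log (μ {ω | X ω > ginv x}).toReal : ℝ) : EReal)) atTop ≤ (n : EReal) ∧
    ∃ c ∈ Icc (1 : ℝ) (n : ℝ),
      Filter.liminf
        (fun x : ℝ =>
          ((-Real.log (μ {ω | g (fun i => Xs i ω) > x}).toReal
              / (c * -Real.log (μ {ω | X ω > ginv x}).toReal) : ℝ) : EReal)) atTop = 1 := by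
  have : Nonempty (Fin n) := ⟨⟨0, by omega⟩⟩
  have hg : Monotone g := monotone_of_monotone_update hmono
  have hgd : StrictMono fun t => g fun _ => t :=
    (hg.comp fun _ _ h _ => h).strictMono_of_injective (Function.LeftInverse.injective hinv1)
  have hginv : Tendsto ginv atTop atTop := by
    refine tendsto_atTop_atTop.2 fun t => ⟨g fun _ => t, fun x hx => ?_⟩
    rw [← hinv2 x] at hx
    exact hgd.le_iff_le.1 hx
  have hq : ∀ t, 0 < μ {ω | t < X ω} := fun t =>
    (hub _ (lt_max_of_lt_right one_pos)).trans_le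
      (measure_mono fun ω hω => (le_max_left t 1).trans_lt hω)
  have hXs : ∀ i t, μ {ω | t < Xs i ω} = μ {ω | t < X ω} := fun i t =>
    (IdentDistrib.mk (hXsm i).aemeasurable hXm.aemeasurable (hident i)).measure_mem_eq
      measurableSet_Ioi
  have hupper : ∀ x, μ {ω | x < g (fun i => Xs i ω)} ≤ n * μ {ω | ginv x < X ω} := fun x => by
    simpa [hinv2, hXs] using measure_diag_lt_le_sum (μ := μ) (Xs := Xs) hg (ginv x)
  have hlower : ∀ x, μ {ω | ginv x < X ω} ^ n ≤ μ {ω | x < g (fun i => Xs i ω)} := fun x => by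
    simpa [hinv2, hXs] using prod_le_measure_diag_lt hg hgd hindep (ginv x)
  have hqx : ∀ x, 0 < (μ {ω | ginv x < X ω}).toReal := fun x =>
    ENNReal.toReal_pos (hq _).ne' (measure_ne_top μ _)
  have hP_ge : ∀ x, (μ {ω | ginv x < X ω}).toReal ^ n ≤
      (μ {ω | x < g (fun i => Xs i ω)}).toReal := fun x => by
    simpa using ENNReal.toReal_mono (measure_ne_top μ _) (hlower x)
  have hP_le : ∀ x, (μ {ω | x < g (fun i => Xs i ω)}).toReal ≤
      n * (μ {ω | ginv x < X ω}).toReal := fun x => by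
    simpa using ENNReal.toReal_mono (by finiteness) (hupper x)
  have hA_le := fun x => neg_log_le_mul_neg_log n (hqx x) (hP_ge x)
  have hA_ge := fun x => neg_log_sub_log_le_neg_log (hqx x) (by positivity)
    ((pow_pos (hqx x) n).trans_le (hP_ge x)) (hP_le x)
  have hB := (tendsto_neg_log_measure_lt_atTop μ hXm hq).comp hginv
  have h₁ := one_le_liminf_div_of_sub_le _ hB (Eventually.of_forall hA_ge)
  have h₂ := liminf_div_le_of_le_mul _ (hB.eventually_gt_atTop 0) (Eventually.of_forall hA_le)
  exact ⟨h₁, by exact_mod_cast h₂,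
    exists_mem_Icc_liminf_div_const_mul_eq_one one_pos (by exact_mod_cast h₁) h₂⟩

theorem stmt11 {Ω : Type*} [MeasurableSpace Ω] (μ : Measure Ω) [IsProbabilityMeasure μ]
    (n : ℕ) (hn : 2 ≤ n) (X : Ω → ℝ) (Xs : Fin n → Ω → ℝ)
    (hXm : Measurable X) (hXsm : ∀ i, Measurable (Xs i))
    (hpos : ∀ ω, 0 < X ω)
    (hub : ∀ a > (0 : ℝ), 0 < μ {ω | X ω > a})
    (hheavy : ∀ s > (0 : ℝ), ∫⁻ ω, ENNReal.ofReal (Real.exp (s * X ω)) ∂μ = ⊤)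
    (hident : ∀ i, Measure.map (Xs i) μ = Measure.map X μ)
    (hindep : ProbabilityTheory.iIndepFun Xs μ)
    (hcontF : ∀ x : ℝ, μ {ω | X ω = x} = 0)
    (g : (Fin n → ℝ) → ℝ)
    (hmono : ∀ (v : Fin n → ℝ) (i : Fin n), Monotone (fun t => g (Function.update v i t)))
    (hgtop : ∀ (v : Fin n → ℝ) (i : Fin n),
      Tendsto (fun t => g (Function.update v i t)) atTop atTop)
    (ginv : ℝ → ℝ)
    (hinv1 : ∀ x : ℝ, ginv (g (fun _ => x)) = x)
    (hinv2 : ∀ x : ℝ, g (fun _ => ginv x) = x) :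
    (1 : EReal) ≤ Filter.liminf
        (fun x : ℝ =>
          ((-Real.log (μ {ω | g (fun i => Xs i ω) > x}).toReal
              / -Real.log (μ {ω | X ω > ginv x}).toReal : ℝ) : EReal)) atTop ∧
    Filter.liminf
        (fun x : ℝ =>
          ((-Real.log (μ {ω | g (fun i => Xs i ω) > x}).toReal
              / -Real.log (μ {ω | X ω > ginv x}).toReal : ℝ) : EReal)) atTop ≤ (n : EReal) ∧
    ∃ c ∈ Icc (1 : ℝ) (n : ℝ),
      Filter.liminf
        (fun x : ℝ =>
          ((-Real.log (μ {ω | g (fun i => Xs i ω) > x}).toReal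
              / (c * -Real.log (μ {ω | X ω > ginv x}).toReal) : ℝ) : EReal)) atTop = 1 :=
  stmt11_general μ n hn X Xs hXm hXsm hub hident hindep g hmono ginv hinv1 hinv2
end

section
/- Let X be a non-negative heavy-tailed random variable with hazard function R (so R(x)/x → has liminf 0). Define x_0 = 0 and x_n = min{x : R(x) ≥ n} for n ≥ 1 (well-defined by right-continuity of R), and let g be the piecewise-linear function with g(0) = 0 and g(x_n) = √(n-1) for n ≥ 1, linearly interpolated between consecutive points x_n. Then g is continuous, g(x) → ∞ as x → ∞, and g(x) = o(R(x)) as x → ∞. -/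
/-!
Write `R` for the hazard function and `x n` for the first point where `R` reaches level `n`.
If `x m ≤ t < x (m + 1)` with `m ≥ 1`, then `m ≤ R t < m + 1`, while `g t` lies between
`g (x m) = √(m - 1)` and `g (x (m + 1)) = √m`. Hence `√(R t - 2) ≤ g t ≤ √(R t)` for `t ≥ x 1`,
so `g → ∞` and `g / R ≤ 1 / √R → 0`, because `R → ∞`.
-/

open MeasureTheory Filter Set Topology

def InterpolatesLinearly (g : ℝ → ℝ) (x : ℕ → ℝ) : Prop :=
  ∀ n : ℕ, x n < x (n + 1) → ∀ t ∈ Icc (x n) (x (n + 1)),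
    g t = g (x n) + (t - x n) / (x (n + 1) - x n) * (g (x (n + 1)) - g (x n))

def IsFirstPassage (R : ℝ → ℝ) (x : ℕ → ℝ) : Prop :=
  ∀ n : ℕ, 1 ≤ n → IsLeast {t : ℝ | (n : ℝ) ≤ R t} (x n)

lemma exists_mem_Ico_of_tendsto_atTop {α : Type*} [LinearOrder α] [NoMaxOrder α] {x : ℕ → α}
    (hx : Tendsto x atTop atTop) {n : ℕ} {t : α} (ht : x n ≤ t) :
    ∃ m, n ≤ m ∧ t ∈ Ico (x m) (x (m + 1)) := by
  by_contra hstep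
  have hbound : ∀ m, n ≤ m → x m ≤ t := fun m hm =>
    Nat.le_induction ht (fun k hk hxk => le_of_not_gt fun hlt => hstep ⟨k, hk, hxk, hlt⟩) m hm
  obtain ⟨m, hm, hlt⟩ := ((eventually_ge_atTop n).and (hx.eventually_gt_atTop t)).exists
  exact (hbound m hm).not_gt hlt

namespace InterpolatesLinearly

variable {g : ℝ → ℝ} {x : ℕ → ℝ}

lemma continuousOn_Icc_succ (hg : InterpolatesLinearly g x) (n : ℕ) :
    ContinuousOn g (Icc (x n) (x (n + 1))) := by
  rcases lt_or_ge (x n) (x (n + 1)) with hlt | hge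
  · exact ContinuousOn.congr (by fun_prop) (hg n hlt)
  · exact (subsingleton_Icc_of_ge hge).continuousOn g

lemma continuousOn_Icc (hg : InterpolatesLinearly g x) (hx : Monotone x) (N : ℕ) :
    ContinuousOn g (Icc (x 0) (x N)) := by
  induction N with
  | zero => exact (subsingleton_Icc_of_ge le_rfl).continuousOn g
  | succ k ih =>
    rw [← Icc_union_Icc_eq_Icc (hx k.zero_le) (hx k.le_succ)]
    exact ih.union_of_isClosed (hg.continuousOn_Icc_succ k) isClosed_Icc isClosed_Icc

lemma continuousOn_Ici (hg : InterpolatesLinearly g x) (hx : Monotone x)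
    (hxtop : Tendsto x atTop atTop) : ContinuousOn g (Ici (x 0)) := by
  intro t ht
  obtain ⟨N, hN⟩ := (hxtop.eventually_gt_atTop t).exists
  refine (hg.continuousOn_Icc hx N t ⟨ht, hN.le⟩).mono_of_mem_nhdsWithin ?_
  filter_upwards [self_mem_nhdsWithin, mem_nhdsWithin_of_mem_nhds (Iio_mem_nhds hN)]
    with s hs hsN
  exact ⟨hs, le_of_lt hsN⟩

lemma mem_Icc_of_le {m : ℕ} {t : ℝ} (hg : InterpolatesLinearly g x)
    (hle : g (x m) ≤ g (x (m + 1))) (ht : t ∈ Ico (x m) (x (m + 1))) :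
    g t ∈ Icc (g (x m)) (g (x (m + 1))) := by
  have hlt : x m < x (m + 1) := ht.1.trans_lt ht.2
  have hpos : 0 < x (m + 1) - x m := sub_pos.2 hlt
  set c := (t - x m) / (x (m + 1) - x m)
  have hc0 : 0 ≤ c := div_nonneg (sub_nonneg.2 ht.1) hpos.le
  have hc1 : c ≤ 1 := (div_le_one hpos).2 (by linarith [ht.2])
  rw [hg m hlt t (Ico_subset_Icc_self ht)]
  constructor <;> nlinarith [sub_nonneg.2 hle]

end InterpolatesLinearly

namespace IsFirstPassage

variable {R : ℝ → ℝ} {x : ℕ → ℝ}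

lemma monotone (hx : IsFirstPassage R x) (h01 : x 0 ≤ x 1) : Monotone x := by
  refine monotone_nat_of_le_succ fun n => ?_
  rcases Nat.eq_zero_or_pos n with rfl | hn
  · exact h01
  · refine (hx n hn).2 ?_
    have hsucc : ((n + 1 : ℕ) : ℝ) ≤ R (x (n + 1)) := (hx (n + 1) (by omega)).1
    push_cast at hsucc
    show (n : ℝ) ≤ R (x (n + 1))
    linarith

lemma le_apply {n : ℕ} {t : ℝ} (hx : IsFirstPassage R x) (hR : Monotone R) (hn : 1 ≤ n)
    (ht : x n ≤ t) : (n : ℝ) ≤ R t :=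
  (hx n hn).1.trans (hR ht)

lemma tendsto_points_atTop (hx : IsFirstPassage R x) (hR : Monotone R) : Tendsto x atTop atTop := by
  refine Filter.tendsto_atTop.2 fun a => ?_
  obtain ⟨N, hN⟩ := exists_nat_gt (R a)
  filter_upwards [eventually_ge_atTop (N + 1)] with n hn
  by_contra! hlt
  have hNn : (N : ℝ) ≤ n := by exact_mod_cast (N.le_succ.trans hn)
  linarith [hx.le_apply hR (by omega) hlt.le]

lemma tendsto_fun_atTop (hx : IsFirstPassage R x) (hR : Monotone R) :
    Tendsto R atTop atTop := by
  refine Filter.tendsto_atTop.2 fun b => ?_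
  obtain ⟨n, hn⟩ := exists_nat_gt b
  filter_upwards [eventually_ge_atTop (x (n + 1))] with t ht
  have := hx.le_apply hR (Nat.le_add_left 1 n) ht
  push_cast at this
  linarith

lemma mem_Ico {m : ℕ} {t : ℝ} (hx : IsFirstPassage R x) (hR : Monotone R) (hm : 1 ≤ m)
    (ht : t ∈ Ico (x m) (x (m + 1))) : R t ∈ Ico (m : ℝ) (m + 1) := by
  refine ⟨hx.le_apply hR hm ht.1, lt_of_not_ge fun hle => ht.2.not_ge ?_⟩
  exact (hx (m + 1) (by omega)).2 (by push_cast; exact hle)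

lemma sqrt_sub_two_le_and_le_sqrt {g : ℝ → ℝ} {t : ℝ} (hx : IsFirstPassage R x)
    (hR : Monotone R) (hg : InterpolatesLinearly g x)
    (hgx : ∀ n : ℕ, 1 ≤ n → g (x n) = √((n : ℝ) - 1)) (ht : x 1 ≤ t) :
    √(R t - 2) ≤ g t ∧ g t ≤ √(R t) := by
  obtain ⟨m, hm, htm⟩ := exists_mem_Ico_of_tendsto_atTop (hx.tendsto_points_atTop hR) ht
  have hgm : g (x (m + 1)) = √(m : ℝ) := by
    rw [hgx (m + 1) (by omega)]; push_cast; ring_nf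
  have hRt := hx.mem_Ico hR hm htm
  have hgt := hg.mem_Icc_of_le (by rw [hgx m hm, hgm]; gcongr; linarith) htm
  rw [hgx m hm, hgm] at hgt
  exact ⟨(Real.sqrt_le_sqrt (by linarith [hRt.2])).trans hgt.1,
    hgt.2.trans (Real.sqrt_le_sqrt hRt.1)⟩

end IsFirstPassage

lemma tendsto_div_nhds_zero_of_abs_le_sqrt {α : Type*} {l : Filter α} {f R : α → ℝ}
    (hR : Tendsto R l atTop) (hf : ∀ᶠ a in l, |f a| ≤ √(R a)) :
    Tendsto (fun a => f a / R a) l (𝓝 0) := by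
  refine squeeze_zero_norm' ?_ (tendsto_inv_atTop_zero.comp (Real.tendsto_sqrt_atTop.comp hR))
  filter_upwards [hf, hR.eventually_gt_atTop 0] with a hfa hRa
  calc ‖f a / R a‖ = |f a| / R a := by rw [Real.norm_eq_abs, abs_div, abs_of_pos hRa]
    _ ≤ √(R a) / R a := by gcongr
    _ = (√(R a))⁻¹ := by rw [Real.sqrt_div_self', one_div]

section Hazard

variable {Ω : Type*} [MeasurableSpace Ω] {μ : Measure Ω} {X : Ω → ℝ}

lemma measure_gt_pos (hX : ∀ a > (0 : ℝ), 0 < μ {ω | X ω > a}) (t : ℝ) :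
    0 < μ {ω | X ω > t} := by
  rcases le_or_gt t 1 with ht | ht
  · exact (hX 1 one_pos).trans_le (measure_mono fun ω hω => ht.trans_lt hω)
  · exact hX t (one_pos.trans ht)

lemma monotone_neg_log_measure_gt [IsFiniteMeasure μ] (hX : ∀ t, 0 < μ {ω | X ω > t}) :
    Monotone fun t => -Real.log (μ {ω | X ω > t}).toReal := by
  intro s t hst
  refine neg_le_neg (Real.log_le_log (ENNReal.toReal_pos (hX t).ne' (measure_ne_top μ _)) ?_)
  exact ENNReal.toReal_mono (measure_ne_top μ _) (measure_mono fun ω hω => hst.trans_lt hω)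

lemma neg_log_measure_gt_of_neg [IsProbabilityMeasure μ] (hX : ∀ ω, 0 ≤ X ω) {t : ℝ}
    (ht : t < 0) : -Real.log (μ {ω | X ω > t}).toReal = 0 := by
  have huniv : {ω | X ω > t} = univ := eq_univ_of_forall fun ω => ht.trans_le (hX ω)
  simp [huniv]

end Hazard

theorem stmt17_general {Ω : Type*} [MeasurableSpace Ω] (μ : Measure Ω) [IsProbabilityMeasure μ]
    (X : Ω → ℝ) (hXnn : ∀ ω, 0 ≤ X ω)
    (hub : ∀ a > (0 : ℝ), 0 < μ {ω | X ω > a})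
    (R : ℝ → ℝ) (hR : ∀ t, R t = -Real.log (μ {ω | X ω > t}).toReal)
    (x : ℕ → ℝ) (hx0 : x 0 = 0)
    (hxn : ∀ n : ℕ, 1 ≤ n → IsLeast {t : ℝ | (n : ℝ) ≤ R t} (x n))
    (g : ℝ → ℝ)
    (hgn : ∀ n : ℕ, 1 ≤ n → g (x n) = Real.sqrt ((n : ℝ) - 1))
    (hglin : ∀ n : ℕ, x n < x (n + 1) →
      ∀ t ∈ Icc (x n) (x (n + 1)),
        g t = g (x n) + (t - x n) / (x (n + 1) - x n) * (g (x (n + 1)) - g (x n))) :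
    ContinuousOn g (Ici 0) ∧ Tendsto g atTop atTop ∧
      Tendsto (fun t => g t / R t) atTop (nhds 0) := by
  have hRmono : Monotone R := by
    simpa only [← funext hR] using monotone_neg_log_measure_gt (measure_gt_pos hub)
  have hxpass : IsFirstPassage R x := hxn
  have hx01 : x 0 ≤ x 1 := by
    rw [hx0]
    by_contra! hneg
    have hR1 : (1 : ℝ) ≤ R (x 1) := by exact_mod_cast (hxn 1 le_rfl).1
    rw [hR, neg_log_measure_gt_of_neg hXnn hneg] at hR1
    norm_num at hR1
  have hRtop := hxpass.tendsto_fun_atTop hRmono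
  have hsqueeze : ∀ᶠ t in atTop, √(R t - 2) ≤ g t ∧ g t ≤ √(R t) :=
    (eventually_ge_atTop (x 1)).mono fun t ht =>
      hxpass.sqrt_sub_two_le_and_le_sqrt hRmono hglin hgn ht
  refine ⟨hx0 ▸ InterpolatesLinearly.continuousOn_Ici hglin (hxpass.monotone hx01)
    (hxpass.tendsto_points_atTop hRmono), ?_, ?_⟩
  · exact tendsto_atTop_mono' _ (hsqueeze.mono fun t ht => ht.1)
      (Real.tendsto_sqrt_atTop.comp (tendsto_atTop_add_const_right _ (-2) hRtop))
  · refine tendsto_div_nhds_zero_of_abs_le_sqrt hRtop (hsqueeze.mono fun t ht => ?_)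
    rw [abs_of_nonneg ((Real.sqrt_nonneg _).trans ht.1)]
    exact ht.2

theorem stmt17 {Ω : Type*} [MeasurableSpace Ω] (μ : Measure Ω) [IsProbabilityMeasure μ]
    (X : Ω → ℝ) (hXnn : ∀ ω, 0 ≤ X ω)
    (hub : ∀ a > (0 : ℝ), 0 < μ {ω | X ω > a})
    (hheavy : ∀ s > (0 : ℝ), ∫⁻ ω, ENNReal.ofReal (Real.exp (s * X ω)) ∂μ = ⊤)
    (R : ℝ → ℝ) (hR : ∀ t, R t = -Real.log (μ {ω | X ω > t}).toReal)
    (x : ℕ → ℝ) (hx0 : x 0 = 0)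
    (hxn : ∀ n : ℕ, 1 ≤ n → IsLeast {t : ℝ | (n : ℝ) ≤ R t} (x n))
    (g : ℝ → ℝ) (hg0 : g 0 = 0)
    (hgn : ∀ n : ℕ, 1 ≤ n → g (x n) = Real.sqrt ((n : ℝ) - 1))
    (hglin : ∀ n : ℕ, x n < x (n + 1) →
      ∀ t ∈ Icc (x n) (x (n + 1)),
        g t = g (x n) + (t - x n) / (x (n + 1) - x n) * (g (x (n + 1)) - g (x n))) :
    ContinuousOn g (Ici 0) ∧ Tendsto g atTop atTop ∧
      Tendsto (fun t => g t / R t) atTop (nhds 0) :=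
  stmt17_general μ X hXnn hub R hR x hx0 hxn g hgn hglin
end
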